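/- Let (X,d) be a compact metric space and T: X → X a homeomorphism that is h-expansive, i.e., there exists δ > 0 with sup_{x∈X} lim_{ε→0} S(B_δ(x, d_ℤ), ε) = 0 where additionally the convergence sup_{x∈X} S(B_δ(x,d_ℤ), ε) → 0 as ε → 0 holds. Then the upper metric mean dimension mdim_M^upper(X, T, d) = 0. -/

import Mathlib

open Filter Set MeasureTheory

/-- Minimal cardinality of an `ε`-spanning set of `K` w.r.t. the (pseudo)metric `ρ`. -/
noncomputable def spanNum {X : Type*} (ρ : X → X → ℝ) (K : Set X) (ε : ℝ) : ℕ :=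
  sInf {n : ℕ | ∃ S : Finset X, S.card = n ∧ ∀ x ∈ K, ∃ y ∈ S, ρ x y ≤ ε}

/-- `d_Ω(x,y) = sup_{n ∈ Ω} d(Tⁿx, Tⁿy)` for a homeomorphism `T` and `Ω ⊆ ℤ`. -/
noncomputable def dOmZ {X : Type*} [MetricSpace X] (T : X ≃ₜ X) (Ω : Set ℤ) (x y : X) : ℝ :=
  ⨆ n : Ω, dist ((T.toEquiv ^ (n : ℤ)) x) ((T.toEquiv ^ (n : ℤ)) y)

/-- `d_N(x,y) = max_{0 ≤ n < N} d(Tⁿx, Tⁿy)`. -/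
noncomputable def dN {X : Type*} [MetricSpace X] (T : X ≃ₜ X) (N : ℕ) : X → X → ℝ :=
  dOmZ T {n : ℤ | 0 ≤ n ∧ n < (N : ℤ)}

/-- Entropy of `K` at scale `ε`: `limsup_{N→∞} (1/N) log #(K, d_N, ε)`. -/
noncomputable def entS {X : Type*} [MetricSpace X] (T : X ≃ₜ X) (K : Set X) (ε : ℝ) : ℝ :=
  limsup (fun N : ℕ => Real.log (spanNum (dN T N) K ε) / N) atTop

/-- The Bowen ball `B_δ(x, d_ℤ)`. -/
def bowenBallZ {X : Type*} [MetricSpace X] (T : X ≃ₜ X) (δ : ℝ) (x : X) : Set X :=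
  {y | dOmZ T univ x y ≤ δ}

/-- Upper metric mean dimension. -/
noncomputable def mdimMUpper {X : Type*} [MetricSpace X] (T : X ≃ₜ X) : ℝ :=
  limsup (fun ε : ℝ => entS T univ ε / Real.log (1 / ε)) (nhdsWithin 0 (Set.Ioi 0))

/-- Lower metric mean dimension. -/
noncomputable def mdimMLower {X : Type*} [MetricSpace X] (T : X ≃ₜ X) : ℝ :=
  liminf (fun ε : ℝ => entS T univ ε / Real.log (1 / ε)) (nhdsWithin 0 (Set.Ioi 0))

/-!
Bowen's argument that an h-expansive map has finite entropy at every scale, with a bound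
independent of the scale. By compactness the Bowen ball `B_δ(x, d_ℤ)` is already approximated by
the ball over a finite time window `[-k, k]`, so smallness of the entropy of Bowen balls yields a
uniform `m` such that every window ball of half-width `m` and radius `δ/2` is `(n, 2ε)`-spanned by
about `exp (n t)` points for some `1 ≤ n ≤ m`. Following an orbit block by block, every window ball
over `[-m, N + m]` is then covered by `exp ((N + m) t)` sets of `d_N`-diameter `4ε`, and
`#(X, d_{N+2m+1}, δ/2) ≤ #(X, d, δ/4) ^ (N + 2m + 1)` such window balls cover `X`. Hence
`S(X, 4ε) ≤ 2 (log #(X, d, δ/4) + t)` stays bounded as `ε → 0`, and dividing by `log (1/ε)` gives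
zero.
-/

open Topology

lemma Homeomorph.toEquiv_zpow {X : Type*} [TopologicalSpace X] (T : X ≃ₜ X) (j : ℤ) :
    (T ^ j).toEquiv = T.toEquiv ^ j :=
  map_zpow (⟨⟨Homeomorph.toEquiv, rfl⟩, fun _ _ => rfl⟩ : (X ≃ₜ X) →* Equiv.Perm X) T j

lemma Homeomorph.continuous_toEquiv_zpow {X : Type*} [TopologicalSpace X] (T : X ≃ₜ X)
    (j : ℤ) : Continuous (T.toEquiv ^ j) := by
  rw [← T.toEquiv_zpow]
  exact (T ^ j).continuous

section Orbit

variable {X : Type*} [MetricSpace X] (T : X ≃ₜ X)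

def orbitDist (j : ℤ) (x y : X) : ℝ :=
  dist ((T.toEquiv ^ j) x) ((T.toEquiv ^ j) y)

def windowBall (a b : ℤ) (r : ℝ) (x : X) : Set X :=
  {y | ∀ j ∈ Icc a b, orbitDist T j x y ≤ r}

variable {T}

lemma orbitDist_zero (x y : X) : orbitDist T 0 x y = dist x y := rfl

lemma orbitDist_triangle (j : ℤ) (x y z : X) :
    orbitDist T j x z ≤ orbitDist T j x y + orbitDist T j y z :=
  dist_triangle _ _ _

lemma orbitDist_zpow (k j : ℤ) (x y : X) :
    orbitDist T j ((T.toEquiv ^ k) x) ((T.toEquiv ^ k) y) = orbitDist T (j + k) x y := by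
  simp only [orbitDist, zpow_add, Equiv.Perm.mul_apply]

lemma continuous_orbitDist (j : ℤ) (x : X) : Continuous (orbitDist T j x) :=
  continuous_const.dist (T.continuous_toEquiv_zpow j)

lemma windowBall_mono {a b a' b' : ℤ} (ha : a' ≤ a) (hb : b ≤ b') (r : ℝ) (x : X) :
    windowBall T a' b' r x ⊆ windowBall T a b r x :=
  fun _ hy j hj => hy j ⟨ha.trans hj.1, hj.2.trans hb⟩

lemma mem_windowBall_of_mem_of_mem {a b : ℤ} {r r' : ℝ} {x y z : X}
    (hz : z ∈ windowBall T a b r x) (hy : y ∈ windowBall T a b r' z) :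
    y ∈ windowBall T a b (r + r') x :=
  fun j hj => (orbitDist_triangle j x z y).trans (add_le_add (hz j hj) (hy j hj))

lemma zpow_mem_windowBall_zpow_iff (k a b : ℤ) (r : ℝ) (x y : X) :
    (T.toEquiv ^ k) y ∈ windowBall T a b r ((T.toEquiv ^ k) x) ↔
      y ∈ windowBall T (a + k) (b + k) r x := by
  simp only [windowBall, mem_ofPred_eq, orbitDist_zpow, mem_Icc]
  refine ⟨fun h j hj => ?_, fun h j hj => h (j + k) (by omega)⟩
  simpa using h (j - k) (by omega)

lemma isClosed_windowBall (a b : ℤ) (r : ℝ) (x : X) : IsClosed (windowBall T a b r x) := by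
  simp only [windowBall, ofPred_forall]
  exact isClosed_biInter fun j _ => isClosed_le (continuous_orbitDist j x) continuous_const

lemma windowBall_mem_nhds (a b : ℤ) {r : ℝ} (hr : 0 < r) (x : X) :
    windowBall T a b r x ∈ 𝓝 x := by
  simp only [windowBall, ofPred_forall]
  refine (biInter_mem (finite_Icc a b)).2 fun j _ => ?_
  have hx : orbitDist T j x x < r := by rwa [orbitDist, dist_self]
  exact ((continuous_orbitDist j x).continuousAt.eventually_lt continuousAt_const hx).mono
    fun _ => le_of_lt

lemma dN_nonneg (N : ℕ) (x y : X) : 0 ≤ dN T N x y :=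
  Real.iSup_nonneg fun _ => dist_nonneg

lemma dN_comm (N : ℕ) (x y : X) : dN T N x y = dN T N y x := by
  simp only [dN, dOmZ, dist_comm]

variable [CompactSpace X]

lemma dOmZ_le_iff {Ω : Set ℤ} {x y : X} {r : ℝ} (hr : 0 ≤ r) :
    dOmZ T Ω x y ≤ r ↔ ∀ j ∈ Ω, orbitDist T j x y ≤ r := by
  have hbdd : BddAbove (range fun j : Ω => orbitDist T j x y) :=
    ⟨Metric.diam (univ : Set X), by
      rintro _ ⟨j, rfl⟩
      exact Metric.dist_le_diam_of_mem Metric.isBounded_of_compactSpace trivial trivial⟩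
  refine ⟨fun h j hj => (le_ciSup hbdd ⟨j, hj⟩).trans h, fun h => ?_⟩
  exact Real.iSup_le (fun j => h j j.2) hr

lemma mem_bowenBallZ_iff {δ : ℝ} (hδ : 0 ≤ δ) {x y : X} :
    y ∈ bowenBallZ T δ x ↔ ∀ k : ℕ, y ∈ windowBall T (-k) k δ x := by
  simp only [bowenBallZ, mem_ofPred_eq, dOmZ_le_iff hδ, mem_univ, true_implies, windowBall]
  refine ⟨fun h k j _ => h j, fun h j => h j.natAbs j ?_⟩
  exact abs_le.1 (Int.abs_eq_natAbs j).le

lemma dN_le_iff {N : ℕ} {x y : X} {r : ℝ} (hr : 0 ≤ r) :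
    dN T N x y ≤ r ↔ ∀ i < N, orbitDist T i x y ≤ r := by
  rw [dN, dOmZ_le_iff hr]
  refine ⟨fun h i hi => h i ⟨by omega, by omega⟩, fun h j ⟨hj0, hjN⟩ => ?_⟩
  simpa [hj0] using h j.toNat (by omega)

lemma orbitDist_le_dN {N i : ℕ} (hi : i < N) (x y : X) : orbitDist T i x y ≤ dN T N x y :=
  (dN_le_iff (dN_nonneg N x y)).1 le_rfl i hi

lemma dN_le_of_le {N n : ℕ} (hN : N ≤ n) {r : ℝ} (hr : 0 ≤ r) {x y : X}
    (h : dN T n x y ≤ r) : dN T N x y ≤ r :=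
  (dN_le_iff hr).2 fun i hi => (dN_le_iff hr).1 h i (hi.trans_le hN)

lemma dN_triangle (N : ℕ) (x y z : X) : dN T N x z ≤ dN T N x y + dN T N y z :=
  (dN_le_iff (add_nonneg (dN_nonneg N x y) (dN_nonneg N y z))).2 fun i hi =>
    (orbitDist_triangle i x y z).trans
      (add_le_add (orbitDist_le_dN hi x y) (orbitDist_le_dN hi y z))

lemma mem_windowBall_zero_iff {N : ℕ} {r : ℝ} (hr : 0 ≤ r) {x y : X} :
    y ∈ windowBall T 0 N r x ↔ dN T (N + 1) x y ≤ r := by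
  rw [dN_le_iff hr]
  refine ⟨fun h i hi => h i ⟨by omega, by omega⟩, fun h j ⟨hj0, hjN⟩ => ?_⟩
  simpa [hj0] using h j.toNat (by omega)

lemma exists_windowBall_subset {δ : ℝ} (hδ : 0 ≤ δ) {x : X} {U : Set X} (hU : IsOpen U)
    (h : bowenBallZ T δ x ⊆ U) : ∃ k : ℕ, windowBall T (-k) k δ x ⊆ U := by
  refine exists_subset_nhds_of_isCompact' ?_ (fun k => (isClosed_windowBall _ _ _ _).isCompact)
    (fun k => isClosed_windowBall _ _ _ _) fun y hy => hU.mem_nhds (h ?_)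
  · exact Antitone.directed_ge fun k l hkl => windowBall_mono (by omega) (by omega) δ x
  · exact (mem_bowenBallZ_iff hδ).2 (mem_iInter.1 hy)

end Orbit

section FineCover

variable {X : Type*}

def IsFineCover (ρ : X → X → ℝ) (K : Set X) (ε : ℝ) (F : Finset (Set X)) : Prop :=
  K ⊆ ⋃ A ∈ F, A ∧ ∀ A ∈ F, ∀ x ∈ A, ∀ y ∈ A, ρ x y ≤ ε

variable {ρ : X → X → ℝ} {K : Set X} {ε : ℝ} {F : Finset (Set X)}

lemma IsFineCover.subset {K' : Set X} (h : IsFineCover ρ K ε F) (hK : K' ⊆ K) :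
    IsFineCover ρ K' ε F :=
  ⟨hK.trans h.1, h.2⟩

lemma IsFineCover.biUnion [DecidableEq (Set X)] {ι : Type*} {E : Finset ι} {K' : ι → Set X}
    {F : ι → Finset (Set X)} (hK : K ⊆ ⋃ e ∈ E, K' e) (hF : ∀ e ∈ E, IsFineCover ρ (K' e) ε (F e)) :
    IsFineCover ρ K ε (E.biUnion F) := by
  refine ⟨fun x hx => ?_, fun A hA => ?_⟩
  · obtain ⟨e, he, hxe⟩ := mem_iUnion₂.1 (hK hx)
    obtain ⟨A, hA, hxA⟩ := mem_iUnion₂.1 ((hF e he).1 hxe)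
    exact mem_iUnion₂.2 ⟨A, Finset.mem_biUnion.2 ⟨e, he, hA⟩, hxA⟩
  · obtain ⟨e, he, hA⟩ := Finset.mem_biUnion.1 hA
    exact (hF e he).2 A hA

lemma IsFineCover.exists_spanning (h : IsFineCover ρ K ε F) :
    ∃ S : Finset X, S.card ≤ F.card ∧ ∀ x ∈ K, ∃ y ∈ S, ρ x y ≤ ε := by
  classical
  rcases K.eq_empty_or_nonempty with rfl | ⟨x₀, -⟩
  · exact ⟨∅, by simp, by simp⟩
  have hc : ∀ A : Set X, ∃ c, A.Nonempty → c ∈ A := fun A =>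
    if hA : A.Nonempty then ⟨hA.some, fun _ => hA.some_mem⟩ else ⟨x₀, fun h' => (hA h').elim⟩
  choose c hc using hc
  refine ⟨F.image c, Finset.card_image_le, fun x hx => ?_⟩
  obtain ⟨A, hA, hxA⟩ := mem_iUnion₂.1 (h.1 hx)
  exact ⟨c A, Finset.mem_image_of_mem c hA, h.2 A hA x hxA _ (hc A ⟨x, hxA⟩)⟩

lemma IsFineCover.spanNum_le (h : IsFineCover ρ K ε F) : spanNum ρ K ε ≤ F.card := by
  obtain ⟨S, hS, hspan⟩ := h.exists_spanning
  exact (Nat.sInf_le ⟨S, rfl, hspan⟩ : spanNum ρ K ε ≤ S.card).trans hS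

lemma exists_card_eq_spanNum (h : ∃ S : Finset X, ∀ x ∈ K, ∃ y ∈ S, ρ x y ≤ ε) :
    ∃ S : Finset X, S.card = spanNum ρ K ε ∧ ∀ x ∈ K, ∃ y ∈ S, ρ x y ≤ ε := by
  obtain ⟨S, hS⟩ := h
  exact Nat.sInf_mem (s := {n | ∃ S : Finset X, S.card = n ∧ ∀ x ∈ K, ∃ y ∈ S, ρ x y ≤ ε})
    ⟨_, S, rfl, hS⟩

end FineCover

section DynamicalCover

variable {X : Type*} [MetricSpace X] [CompactSpace X] {T : X ≃ₜ X}

lemma IsFineCover.mono_dN {K : Set X} {ε : ℝ} {F : Finset (Set X)} {n N : ℕ}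
    (h : IsFineCover (dN T n) K ε F) (hN : N ≤ n) (hε : 0 ≤ ε) : IsFineCover (dN T N) K ε F :=
  ⟨h.1, fun A hA x hx y hy => dN_le_of_le hN hε (h.2 A hA x hx y hy)⟩

lemma IsFineCover.join [DecidableEq (Set X)] {K K' : Set X} {ε : ℝ} {F₁ F₂ : Finset (Set X)}
    {k N : ℕ} (h₁ : IsFineCover (dN T k) K ε F₁) (h₂ : IsFineCover (dN T N) K' ε F₂)
    (hKK' : MapsTo (T.toEquiv ^ (k : ℤ)) K K') (hε : 0 ≤ ε) :
    IsFineCover (dN T (k + N)) K ε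
      (Finset.image₂ (fun A B => A ∩ (T.toEquiv ^ (k : ℤ)) ⁻¹' B) F₁ F₂) := by
  refine ⟨fun x hx => ?_, fun C hC x hx y hy => ?_⟩
  · obtain ⟨A, hA, hxA⟩ := mem_iUnion₂.1 (h₁.1 hx)
    obtain ⟨B, hB, hxB⟩ := mem_iUnion₂.1 (h₂.1 (hKK' hx))
    exact mem_iUnion₂.2 ⟨_, Finset.mem_image₂_of_mem hA hB, hxA, hxB⟩
  obtain ⟨A, hA, B, hB, rfl⟩ := Finset.mem_image₂.1 hC
  rw [dN_le_iff hε]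
  intro i hi
  rcases lt_or_ge i k with hik | hki
  · exact (dN_le_iff hε).1 (h₁.2 A hA x hx.1 y hy.1) i hik
  · obtain ⟨i, rfl⟩ := Nat.exists_eq_add_of_le hki
    have := (dN_le_iff hε).1 (h₂.2 B hB _ hx.2 _ hy.2) i (by omega)
    rwa [orbitDist_zpow, add_comm, ← Nat.cast_add] at this

lemma exists_isFineCover_dist {η : ℝ} (hη : 0 < η) :
    ∃ F, IsFineCover dist (univ : Set X) (2 * η) F ∧ F.card ≤ spanNum dist (univ : Set X) η := by
  classical
  obtain ⟨t, -, ht, hcover⟩ := isCompact_univ.finite_cover_balls (X := X) hη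
  obtain ⟨S, hScard, hS⟩ := exists_card_eq_spanNum (ρ := dist) (K := univ) (ε := η)
    ⟨ht.toFinset, fun x _ => by
      obtain ⟨y, hy, hxy⟩ := mem_iUnion₂.1 (hcover (mem_univ x))
      exact ⟨y, ht.mem_toFinset.2 hy, (Metric.mem_ball.1 hxy).le⟩⟩
  refine ⟨S.image (Metric.closedBall · η), ⟨fun x hx => ?_, ?_⟩, hScard ▸ Finset.card_image_le⟩
  · obtain ⟨y, hy, hxy⟩ := hS x hx
    exact mem_iUnion₂.2 ⟨_, Finset.mem_image_of_mem _ hy, hxy⟩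
  · simp only [Finset.mem_image]
    rintro _ ⟨p, -, rfl⟩ x hx y hy
    linarith [dist_triangle_right x y p, Metric.mem_closedBall.1 hx, Metric.mem_closedBall.1 hy]

lemma exists_isFineCover_dN {η : ℝ} (hη : 0 < η) (N : ℕ) :
    ∃ F, IsFineCover (dN T N) (univ : Set X) (2 * η) F ∧
      F.card ≤ spanNum dist (univ : Set X) η ^ N := by
  classical
  obtain ⟨F₁, hF₁, hcard₁⟩ := exists_isFineCover_dist (X := X) hη
  have hF₁' : IsFineCover (dN T 1) univ (2 * η) F₁ :=
    ⟨hF₁.1, fun A hA x hx y hy => (dN_le_iff (by positivity)).2 fun i hi => by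
      simpa [Nat.lt_one_iff.1 hi, orbitDist_zero] using hF₁.2 A hA x hx y hy⟩
  induction N with
  | zero =>
    refine ⟨{univ}, ⟨by simp, fun _ _ x _ y _ => (dN_le_iff (by positivity)).2 (by simp)⟩, ?_⟩
    simp
  | succ N ih =>
    obtain ⟨F, hF, hcard⟩ := ih
    refine ⟨_, add_comm N 1 ▸ hF₁'.join hF (mapsTo_univ _ _) (by positivity), ?_⟩
    calc _ ≤ F₁.card * F.card := Finset.card_image₂_le _ _ _
      _ ≤ spanNum dist univ η * spanNum dist univ η ^ N := Nat.mul_le_mul hcard₁ hcard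
      _ = spanNum dist univ η ^ (N + 1) := (pow_succ' _ _).symm

lemma spanNum_dN_le_exp {η : ℝ} (hη : 0 < η) (K : Set X) (N : ℕ) :
    (spanNum (dN T N) K (2 * η) : ℝ) ≤ Real.exp (N * Real.log (spanNum dist (univ : Set X) η)) := by
  obtain ⟨F, hF, hcard⟩ := exists_isFineCover_dN (T := T) hη N
  calc (spanNum (dN T N) K (2 * η) : ℝ) ≤ (spanNum dist (univ : Set X) η : ℝ) ^ N := by
        exact_mod_cast (hF.subset (subset_univ K)).spanNum_le.trans hcard
    _ ≤ Real.exp (Real.log (spanNum dist (univ : Set X) η)) ^ N :=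
        pow_le_pow_left₀ (Nat.cast_nonneg _) (Real.le_exp_log _) N
    _ = _ := (Real.exp_nat_mul _ N).symm

lemma exists_spanning_dN {ε : ℝ} (hε : 0 < ε) (K : Set X) (N : ℕ) :
    ∃ S : Finset X, ∀ x ∈ K, ∃ y ∈ S, dN T N x y ≤ ε := by
  obtain ⟨F, hF, -⟩ := exists_isFineCover_dN (T := T) (half_pos hε) N
  obtain ⟨S, -, hS⟩ := (hF.subset (subset_univ K)).exists_spanning
  exact ⟨S, by rwa [mul_div_cancel₀ _ two_ne_zero] at hS⟩

end DynamicalCover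

lemma Real.log_natCast_div_le {n N : ℕ} {t : ℝ} (ht : 0 ≤ t) (h : (n : ℝ) ≤ Real.exp (N * t)) :
    Real.log n / N ≤ t := by
  rcases n.eq_zero_or_pos with rfl | hn
  · simpa using ht
  rcases N.eq_zero_or_pos with rfl | hN
  · simpa using ht
  rw [div_le_iff₀ (by exact_mod_cast hN), mul_comm]
  exact (Real.log_le_iff_le_exp (by exact_mod_cast hn)).2 h

section Entropy

variable {X : Type*} [MetricSpace X] {T : X ≃ₜ X} {K : Set X} {ε : ℝ}

lemma log_spanNum_div_nonneg (K : Set X) (ε : ℝ) (N : ℕ) :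
    0 ≤ Real.log (spanNum (dN T N) K ε) / N :=
  div_nonneg (Real.log_natCast_nonneg _) N.cast_nonneg

lemma entS_le_of_eventually_le_exp {t : ℝ} (ht : 0 ≤ t)
    (h : ∀ᶠ N : ℕ in atTop, (spanNum (dN T N) K ε : ℝ) ≤ Real.exp (N * t)) : entS T K ε ≤ t :=
  limsup_le_of_le (isCoboundedUnder_le_of_le atTop (log_spanNum_div_nonneg K ε))
    (h.mono fun _ => Real.log_natCast_div_le ht)

variable [CompactSpace X]


lemma spanNum_dN_le_exp_log (hε : 0 < ε) (K : Set X) (N : ℕ) :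
    (spanNum (dN T N) K ε : ℝ) ≤ Real.exp (N * Real.log (spanNum dist (univ : Set X) (ε / 2))) := by
  simpa [mul_div_cancel₀] using spanNum_dN_le_exp (T := T) (half_pos hε) K N

lemma entS_le_log_spanNum (hε : 0 < ε) (K : Set X) :
    entS T K ε ≤ Real.log (spanNum dist (univ : Set X) (ε / 2)) :=
  entS_le_of_eventually_le_exp (Real.log_natCast_nonneg _)
    (Eventually.of_forall (spanNum_dN_le_exp_log hε K))

lemma isBoundedUnder_log_spanNum_div (hε : 0 < ε) (K : Set X) :
    IsBoundedUnder (· ≤ ·) atTop fun N : ℕ => Real.log (spanNum (dN T N) K ε) / N :=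
  isBoundedUnder_of ⟨_, fun N =>
    Real.log_natCast_div_le (Real.log_natCast_nonneg _) (spanNum_dN_le_exp_log hε K N)⟩

lemma entS_nonneg (hε : 0 < ε) (K : Set X) : 0 ≤ entS T K ε :=
  le_limsup_of_frequently_le (Frequently.of_forall (log_spanNum_div_nonneg K ε))
    (isBoundedUnder_log_spanNum_div hε K)

lemma eventually_spanNum_le_exp (hε : 0 < ε) {t : ℝ} (h : entS T K ε < t) :
    ∀ᶠ N : ℕ in atTop, (spanNum (dN T N) K ε : ℝ) ≤ Real.exp (N * t) := by
  filter_upwards [eventually_lt_of_limsup_lt h (isBoundedUnder_log_spanNum_div hε K),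
    eventually_gt_atTop 0] with N hN hN0
  rw [div_lt_iff₀ (by exact_mod_cast hN0), mul_comm] at hN
  exact (Real.le_exp_log _).trans (Real.exp_le_exp.2 hN.le)

end Entropy

section Bowen

variable {X : Type*} [MetricSpace X] {T : X ≃ₜ X} {δ ε t : ℝ}

def UniformlyWindowSpanned (T : X ≃ₜ X) (m : ℕ) (r ε t : ℝ) : Prop :=
  ∀ z : X, ∃ n : ℕ, 1 ≤ n ∧ n ≤ m ∧ ∃ S : Finset X, (S.card : ℝ) ≤ Real.exp (n * t) ∧
    ∀ y ∈ windowBall T (-m) m r z, ∃ p ∈ S, dN T n y p ≤ ε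

variable [CompactSpace X]

lemma exists_windowBall_spanned (hδ : 0 ≤ δ) (hε : 0 < ε) {x : X}
    (h : entS T (bowenBallZ T δ x) ε < t) :
    ∃ n : ℕ, 1 ≤ n ∧ ∃ S : Finset X, (S.card : ℝ) ≤ Real.exp (n * t) ∧
      ∃ k : ℕ, ∀ y ∈ windowBall T (-k) k δ x, ∃ p ∈ S, dN T n y p ≤ 2 * ε := by
  obtain ⟨n, hn, hn1⟩ := ((eventually_spanNum_le_exp hε h).and (eventually_ge_atTop 1)).exists
  obtain ⟨S, hScard, hS⟩ :=
    exists_card_eq_spanNum (exists_spanning_dN (T := T) hε (bowenBallZ T δ x) n)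
  set U := ⋃ p ∈ S, ⋂ i ∈ Finset.range n, {y | orbitDist T i p y < 2 * ε}
  have hU : IsOpen U := isOpen_biUnion fun p _ => isOpen_biInter_finset fun i _ =>
    isOpen_lt (continuous_orbitDist i p) continuous_const
  have hBU : bowenBallZ T δ x ⊆ U := fun y hy => by
    obtain ⟨p, hp, hyp⟩ := hS y hy
    refine mem_iUnion₂.2 ⟨p, hp, mem_iInter₂.2 fun i hi => ?_⟩
    calc orbitDist T i p y ≤ dN T n p y := orbitDist_le_dN (Finset.mem_range.1 hi) p y
      _ = dN T n y p := dN_comm n p y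
      _ < 2 * ε := by linarith
  obtain ⟨k, hk⟩ := exists_windowBall_subset hδ hU hBU
  refine ⟨n, hn1, S, by rw [hScard]; exact hn, k, fun y hy => ?_⟩
  obtain ⟨p, hp, hyp⟩ := mem_iUnion₂.1 (hk hy)
  refine ⟨p, hp, dN_comm (T := T) n p y ▸ (dN_le_iff (by positivity)).2 fun i hi => ?_⟩
  exact (mem_iInter₂.1 hyp i (Finset.mem_range.2 hi)).le

lemma exists_uniform_windowBall_spanned (hδ : 0 < δ) (hε : 0 < ε)
    (h : ∀ x, entS T (bowenBallZ T δ x) ε < t) :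
    ∃ m : ℕ, UniformlyWindowSpanned T m (δ / 2) (2 * ε) t := by
  choose n hn1 S hS k hk using fun x => exists_windowBall_spanned hδ.le hε (h x)
  obtain ⟨c, -, hc⟩ := isCompact_univ.elim_nhds_subcover
    (fun x => windowBall T (-k x) (k x) (δ / 2) x)
    fun x _ => windowBall_mem_nhds _ _ (half_pos hδ) x
  refine ⟨c.sup fun x => max (k x) (n x), fun z => ?_⟩
  obtain ⟨x, hx, hzx⟩ := mem_iUnion₂.1 (hc (mem_univ z))
  have hkn := Finset.le_sup (f := fun x => max (k x) (n x)) hx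
  refine ⟨n x, hn1 x, le_of_max_le_right hkn, S x, hS x, fun y hy => hk x y ?_⟩
  have := mem_windowBall_of_mem_of_mem hzx (windowBall_mono (by omega) (by omega) _ _ hy)
  rwa [add_halves] at this

/-- Bowen's block argument: along the orbit of `e`, each visited point `z` contributes the time
and the spanning set that `hwin` provides for it. -/
lemma exists_isFineCover_windowBall {m : ℕ} {r : ℝ} (ht : 0 ≤ t) (hε : 0 ≤ ε) (hwin : UniformlyWindowSpanned T m r ε t) (N : ℕ) (e : X) :
    ∃ F, IsFineCover (dN T N) (windowBall T (-m) (N + m) r e) (2 * ε) F ∧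
      (F.card : ℝ) ≤ Real.exp ((N + m) * t) := by
  classical
  induction N using Nat.strong_induction_on generalizing e with
  | _ N ih =>
  obtain ⟨n, hn1, hnm, S, hS, hspan⟩ := hwin e
  have hF₀ : IsFineCover (dN T n) (windowBall T (-m) (N + m) r e) (2 * ε)
      (S.image fun p => {y | dN T n y p ≤ ε}) := by
    refine ⟨fun y hy => ?_, ?_⟩
    · obtain ⟨p, hp, hyp⟩ := hspan y (windowBall_mono le_rfl (by omega) r e hy)
      exact mem_iUnion₂.2 ⟨_, Finset.mem_image_of_mem _ hp, hyp⟩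
    · simp only [Finset.mem_image]
      rintro _ ⟨p, -, rfl⟩ x (hx : dN T n x p ≤ ε) y (hy : dN T n y p ≤ ε)
      linarith [dN_triangle (T := T) n x p y, dN_comm (T := T) n p y]
  have hcard₀ : ((S.image fun p => {y | dN T n y p ≤ ε}).card : ℝ) ≤ Real.exp (n * t) :=
    le_trans (by exact_mod_cast Finset.card_image_le) hS
  rcases le_or_gt N n with hNn | hnN
  · refine ⟨_, hF₀.mono_dN hNn (by positivity), hcard₀.trans (Real.exp_le_exp.2 ?_)⟩
    exact mul_le_mul_of_nonneg_right (by exact_mod_cast (by omega : n ≤ N + m)) ht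
  obtain ⟨N, rfl⟩ := Nat.exists_eq_add_of_le hnN.le
  obtain ⟨F, hF, hcard⟩ := ih N (by omega) ((T.toEquiv ^ (n : ℤ)) e)
  have hmaps : MapsTo (T.toEquiv ^ (n : ℤ)) (windowBall T (-m) (↑(n + N) + m) r e)
      (windowBall T (-m) (N + m) r ((T.toEquiv ^ (n : ℤ)) e)) := fun y hy =>
    (zpow_mem_windowBall_zpow_iff _ _ _ _ _ _).2 (windowBall_mono (by omega) (by omega) r e hy)
  refine ⟨_, hF₀.join hF hmaps (by positivity), ?_⟩
  calc _ ≤ ((S.image fun p => {y | dN T n y p ≤ ε}).card : ℝ) * F.card := by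
        exact_mod_cast Finset.card_image₂_le _ _ _
    _ ≤ Real.exp (n * t) * Real.exp ((N + m) * t) :=
        mul_le_mul hcard₀ hcard (Nat.cast_nonneg _) (Real.exp_pos _).le
    _ = Real.exp ((↑(n + N) + m) * t) := by rw [← Real.exp_add]; push_cast; ring_nf

lemma exists_isFineCover_univ {m : ℕ} {r : ℝ} (hr : 0 < r) (ht : 0 ≤ t) (hε : 0 ≤ ε) (hwin : UniformlyWindowSpanned T m r ε t) (N : ℕ) :
    ∃ F, IsFineCover (dN T N) (univ : Set X) (2 * ε) F ∧
      (F.card : ℝ) ≤ spanNum (dN T (N + 2 * m + 1)) (univ : Set X) r * Real.exp ((N + m) * t) := by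
  classical
  choose F hF hcard using exists_isFineCover_windowBall ht hε hwin N
  obtain ⟨S, hScard, hS⟩ :=
    exists_card_eq_spanNum (exists_spanning_dN (T := T) hr univ (N + 2 * m + 1))
  set E := S.image (T.toEquiv ^ (m : ℤ))
  refine ⟨E.biUnion F, IsFineCover.biUnion (fun x _ => ?_) fun e _ => hF e, ?_⟩
  · obtain ⟨q, hq, hxq⟩ := hS ((T.toEquiv ^ (-(m : ℤ))) x) trivial
    refine mem_iUnion₂.2 ⟨_, Finset.mem_image_of_mem _ hq, ?_⟩
    have hx : x = (T.toEquiv ^ (m : ℤ)) ((T.toEquiv ^ (-(m : ℤ))) x) := by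
      rw [← Equiv.Perm.mul_apply, ← zpow_add, add_neg_cancel, zpow_zero, Equiv.Perm.one_apply]
    have hq' := (mem_windowBall_zero_iff (N := N + 2 * m) hr.le).2 (dN_comm (T := T) _ _ _ ▸ hxq)
    rw [hx, zpow_mem_windowBall_zpow_iff]
    convert hq' using 2 <;> push_cast <;> ring
  calc ((E.biUnion F).card : ℝ) ≤ ∑ e ∈ E, ((F e).card : ℝ) := by
        exact_mod_cast Finset.card_biUnion_le
    _ ≤ E.card * Real.exp ((N + m) * t) := by
        simpa using Finset.sum_le_card_nsmul E _ _ fun e _ => hcard e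
    _ ≤ S.card * Real.exp ((N + m) * t) :=
        mul_le_mul_of_nonneg_right (by exact_mod_cast Finset.card_image_le) (Real.exp_pos _).le
    _ = _ := by rw [hScard]


lemma spanNum_univ_le (hδ : 0 < δ) (hε : 0 < ε) (ht : 0 ≤ t)
    (h : ∀ x, entS T (bowenBallZ T δ x) ε < t) :
    ∃ m : ℕ, ∀ N : ℕ, (spanNum (dN T N) (univ : Set X) (4 * ε) : ℝ) ≤
      Real.exp ((N + 2 * m + 1) * Real.log (spanNum dist (univ : Set X) (δ / 4))) *
        Real.exp ((N + m) * t) := by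
  obtain ⟨m, hwin⟩ := exists_uniform_windowBall_spanned hδ hε h
  refine ⟨m, fun N => ?_⟩
  obtain ⟨F, hF, hcard⟩ := exists_isFineCover_univ (half_pos hδ) ht (by positivity) hwin N
  have hR := spanNum_dN_le_exp_log (T := T) (half_pos hδ) univ (N + 2 * m + 1)
  rw [div_div, show (2 : ℝ) * 2 = 4 by norm_num] at hR
  push_cast at hR
  calc (spanNum (dN T N) (univ : Set X) (4 * ε) : ℝ) ≤ F.card := by
        rw [show 4 * ε = 2 * (2 * ε) by ring]
        exact_mod_cast hF.spanNum_le
    _ ≤ _ := hcard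
    _ ≤ _ := mul_le_mul_of_nonneg_right hR (Real.exp_pos _).le

lemma entS_univ_le (hδ : 0 < δ) (hε : 0 < ε) (ht : 0 ≤ t)
    (h : ∀ x, entS T (bowenBallZ T δ x) ε < t) :
    entS T univ (4 * ε) ≤ 2 * (Real.log (spanNum dist (univ : Set X) (δ / 4)) + t) := by
  obtain ⟨m, hm⟩ := spanNum_univ_le hδ hε ht h
  have hR := Real.log_natCast_nonneg (spanNum dist (univ : Set X) (δ / 4))
  refine entS_le_of_eventually_le_exp (by positivity) ?_
  filter_upwards [eventually_ge_atTop (2 * m + 1)] with N hN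
  have hN' : (2 * m + 1 : ℝ) ≤ N := by exact_mod_cast hN
  refine (hm N).trans ?_
  rw [← Real.exp_add]
  exact Real.exp_le_exp.2 (by nlinarith)

lemma eventually_entS_univ_le (hδ : 0 < δ)
    (h : Tendsto (fun ε => ⨆ x, entS T (bowenBallZ T δ x) ε) (𝓝[>] 0) (𝓝 0)) :
    ∀ᶠ ε in 𝓝[>] 0, entS T univ ε ≤ 2 * (Real.log (spanNum dist (univ : Set X) (δ / 4)) + 1) := by
  have hsmall := (eventually_mem_nhdsWithin (a := (0 : ℝ)) (s := Ioi 0)).and (h.eventually (gt_mem_nhds one_pos))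
  filter_upwards [eventually_nhdsGT_zero_mul_left (by norm_num : (0 : ℝ) < 1 / 4) hsmall]
    with ε ⟨hε, hsup⟩
  have hbdd : BddAbove (range fun x => entS T (bowenBallZ T δ x) (1 / 4 * ε)) :=
    ⟨_, forall_mem_range.2 fun x => entS_le_log_spanNum hε _⟩
  have := entS_univ_le hδ hε zero_le_one fun x => (le_ciSup hbdd x).trans_lt hsup
  rwa [show 4 * (1 / 4 * ε) = ε by ring] at this

end Bowen

lemma tendsto_div_log_inv_of_bounded {f : ℝ → ℝ} {C : ℝ} (h₀ : ∀ᶠ ε in 𝓝[>] 0, 0 ≤ f ε)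
    (hC : ∀ᶠ ε in 𝓝[>] 0, f ε ≤ C) :
    Tendsto (fun ε => f ε / Real.log (1 / ε)) (𝓝[>] 0) (𝓝 0) := by
  have hlog : Tendsto (fun ε : ℝ => Real.log (1 / ε)) (𝓝[>] 0) atTop := by
    simpa only [Function.comp_def, one_div] using Real.tendsto_log_atTop.comp tendsto_inv_nhdsGT_zero
  have hpos := hlog.eventually_ge_atTop 0
  refine tendsto_of_tendsto_of_tendsto_of_le_of_le' tendsto_const_nhds
    (tendsto_const_nhds (x := C).div_atTop hlog) ?_ ?_
  · filter_upwards [h₀, hpos] with ε h₁ h₂ using div_nonneg h₁ h₂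
  · filter_upwards [hC, hpos] with ε h₁ h₂ using div_le_div_of_nonneg_right h₁ h₂

/-- An h-expansive homeomorphism has zero upper metric mean dimension. -/
theorem stmt17 {X : Type*} [MetricSpace X] [CompactSpace X] (T : X ≃ₜ X)
    (h : ∃ δ : ℝ, 0 < δ ∧
      Tendsto (fun ε : ℝ => ⨆ x : X, entS T (bowenBallZ T δ x) ε)
        (nhdsWithin 0 (Set.Ioi 0)) (nhds 0)) :
    mdimMUpper T = 0 := by
  obtain ⟨δ, hδ, h⟩ := h
  refine (tendsto_div_log_inv_of_bounded ?_ (eventually_entS_univ_le hδ h)).limsup_eq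
  filter_upwards [self_mem_nhdsWithin] with ε hε using entS_nonneg hε univ
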